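/- Let b > 0, let Q : ℝ → ℝ be continuously differentiable with Q(τ) > 0 for all τ ∈ [−b,b], let R : ℝ → ℝ be continuous, and let σ be the unique real number satisfying 2b·Q(−b) = ∫_{−b}^{b} (σ − R(x))·(b−x)·Q(x) dx. Set A := ∫_{−b}^{b} Q(x) dx and B := ∫_{−b}^{b} x·Q(x) dx, and let φ be the momentum profile φ(τ) := (1/Q(τ)) · (2(τ+b)·Q(−b) − 2·∫_{−b}^{τ} (σ − R(x))·(τ−x)·Q(x) dx). Then Q(b)·(bA − B) > 0, φ is differentiable at b, and −φ′(b)/2 = (Q(−b)·(bA + B) − A·∫_{−b}^{b} x·R(x)·Q(x) dx + B·∫_{−b}^{b} R(x)·Q(x) dx) / (Q(b)·(bA − B)). -/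

import Mathlib

/-!
Write `φ = N / Q`. The normalisation of `σ` says exactly that `N(b) = 0`, so
`φ'(b) = N'(b) / Q(b)`, and differentiating under the integral sign gives
`N'(τ) = 2 Q(-b) - 2 ∫_{-b}^{τ} (σ - R) Q` because the kernel `τ - x` vanishes at `x = τ`.
Expanding both this and the normalisation of `σ` in the moments `A`, `B`, `∫ R Q`, `∫ x R Q`
and eliminating `σ` gives the formula; the denominator is positive because
`b A - B = ∫_{-b}^{b} (b - x) Q(x) dx`.
-/

open intervalIntegral

/-- The momentum profile
`φ(τ) = (1/Q(τ)) · (2(τ+b)·Q(−b) − 2∫_{−b}^{τ} (σ − R(x))(τ−x)Q(x) dx)`. -/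
noncomputable def momentumProfile (b σ : ℝ) (Q R : ℝ → ℝ) : ℝ → ℝ := fun τ =>
  (1 / Q τ) * (2 * (τ + b) * Q (-b) - 2 * ∫ x in (-b)..τ, (σ - R x) * (τ - x) * Q x)

theorem integral_sub_mul_eq {f : ℝ → ℝ} (hf : Continuous f) (a t : ℝ) :
    ∫ x in a..t, (t - x) * f x = t * (∫ x in a..t, f x) - ∫ x in a..t, x * f x := by
  simp_rw [sub_mul]
  rw [integral_sub (Continuous.intervalIntegrable (by fun_prop) _ _)
    (Continuous.intervalIntegrable (by fun_prop) _ _), integral_const_mul]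

theorem integral_const_sub_mul {R Q : ℝ → ℝ} (hR : Continuous R) (hQ : Continuous Q)
    (a t σ : ℝ) :
    ∫ x in a..t, (σ - R x) * Q x = σ * (∫ x in a..t, Q x) - ∫ x in a..t, R x * Q x := by
  rw [← integral_const_mul, ← integral_sub (Continuous.intervalIntegrable (by fun_prop) _ _)
    (Continuous.intervalIntegrable (by fun_prop) _ _)]
  exact integral_congr fun x _ => by ring

theorem integral_const_sub_mul_sub_mul {R Q : ℝ → ℝ} (hR : Continuous R) (hQ : Continuous Q)
    (a t σ : ℝ) :
    ∫ x in a..t, (σ - R x) * (t - x) * Q x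
      = σ * (t * (∫ x in a..t, Q x) - ∫ x in a..t, x * Q x)
        - (t * (∫ x in a..t, R x * Q x) - ∫ x in a..t, x * R x * Q x) := by
  have hxRQ : ∫ x in a..t, x * R x * Q x = ∫ x in a..t, x * (R x * Q x) := by
    simp_rw [mul_assoc]
  rw [hxRQ, ← integral_sub_mul_eq hQ,
    ← integral_sub_mul_eq (f := fun x => R x * Q x) (by fun_prop), ← integral_const_mul,
    ← integral_sub (Continuous.intervalIntegrable (by fun_prop) _ _)
      (Continuous.intervalIntegrable (by fun_prop) _ _)]
  exact integral_congr fun x _ => by ring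

theorem integral_sub_mul_pos {f : ℝ → ℝ} {a b : ℝ} (hab : a < b)
    (hf : ContinuousOn f (Set.Icc a b)) (hpos : ∀ x ∈ Set.Ioo a b, 0 < f x) :
    0 < ∫ x in a..b, (b - x) * f x := by
  refine intervalIntegral_pos_of_pos_on ?_ (fun x hx => mul_pos (sub_pos.2 hx.2) (hpos x hx)) hab
  refine ContinuousOn.intervalIntegrable ?_
  rw [Set.uIcc_of_le hab.le]
  exact (continuousOn_const.sub continuousOn_id).mul hf

theorem hasDerivAt_integral_sub_mul {f : ℝ → ℝ} (hf : Continuous f) (a t : ℝ) :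
    HasDerivAt (fun s => ∫ x in a..s, (s - x) * f x) (∫ x in a..t, f x) t := by
  simp_rw [integral_sub_mul_eq hf]
  have hF := (hf.integral_hasStrictDerivAt a t).hasDerivAt
  have hG : HasDerivAt (fun s => ∫ x in a..s, x * f x) (t * f t) t :=
    ((continuous_id'.mul hf).integral_hasStrictDerivAt a t).hasDerivAt
  exact (((hasDerivAt_id' t).mul hF).sub hG).congr_deriv (by ring)

theorem HasDerivAt.div_of_left_eq_zero {f g : ℝ → ℝ} {f' g' x : ℝ} (hf : HasDerivAt f f' x)
    (hg : HasDerivAt g g' x) (hx : g x ≠ 0) (hfx : f x = 0) :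
    HasDerivAt (fun y => f y / g y) (f' / g x) x :=
  (hf.div hg hx).congr_deriv (by rw [hfx]; field_simp; ring)

theorem hasDerivAt_momentumProfile {b σ τ : ℝ} {Q R : ℝ → ℝ} (hQ : Continuous Q)
    (hR : Continuous R) (hQτ : DifferentiableAt ℝ Q τ) (hQτ₀ : Q τ ≠ 0)
    (hτ : 2 * (τ + b) * Q (-b) = 2 * ∫ x in (-b)..τ, (σ - R x) * (τ - x) * Q x) :
    HasDerivAt (momentumProfile b σ Q R)
      (2 * (Q (-b) - ∫ x in (-b)..τ, (σ - R x) * Q x) / Q τ) τ := by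
  have hI : HasDerivAt (fun s => ∫ x in (-b)..s, (σ - R x) * (s - x) * Q x)
      (∫ x in (-b)..τ, (σ - R x) * Q x) τ := by
    convert hasDerivAt_integral_sub_mul (f := fun x => (σ - R x) * Q x) (by fun_prop) (-b) τ
      using 2 with s
    exact integral_congr fun x _ => by ring
  have hN : HasDerivAt
      (fun s => 2 * (s + b) * Q (-b) - 2 * ∫ x in (-b)..s, (σ - R x) * (s - x) * Q x)
      (2 * (Q (-b) - ∫ x in (-b)..τ, (σ - R x) * Q x)) τ :=
    ((((hasDerivAt_id' τ).add_const b).const_mul 2).mul_const (Q (-b))).sub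
      (hI.const_mul 2) |>.congr_deriv (by ring)
  have hφ : momentumProfile b σ Q R = fun s =>
      (2 * (s + b) * Q (-b) - 2 * ∫ x in (-b)..s, (σ - R x) * (s - x) * Q x) / Q s := by
    ext s
    exact one_div_mul_eq_div _ _
  rw [hφ]
  exact hN.div_of_left_eq_zero hQτ.hasDerivAt hQτ₀ (sub_eq_zero.2 hτ)

/-- Formula for the cone angle parameter `β = −φ′(b)/2` of the
momentum-constructed conically singular cscK metric (equation (formcangle)). -/
theorem momentumProfile_cone_angle_formula (b : ℝ) (hb : 0 < b) (Q R : ℝ → ℝ)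
    (hQ : ContDiff ℝ 1 Q) (hR : Continuous R)
    (hQpos : ∀ τ ∈ Set.Icc (-b) b, 0 < Q τ) (σ : ℝ)
    (hσ : 2 * b * Q (-b) = ∫ x in (-b)..b, (σ - R x) * (b - x) * Q x) :
    0 < Q b * (b * (∫ x in (-b)..b, Q x) - ∫ x in (-b)..b, x * Q x) ∧
    DifferentiableAt ℝ (momentumProfile b σ Q R) b ∧
    -(deriv (momentumProfile b σ Q R) b) / 2 =
      (Q (-b) * (b * (∫ x in (-b)..b, Q x) + ∫ x in (-b)..b, x * Q x)
        - (∫ x in (-b)..b, Q x) * (∫ x in (-b)..b, x * R x * Q x)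
        + (∫ x in (-b)..b, x * Q x) * (∫ x in (-b)..b, R x * Q x)) /
      (Q b * (b * (∫ x in (-b)..b, Q x) - ∫ x in (-b)..b, x * Q x)) := by
  have hQc := hQ.continuous
  have hQb : 0 < Q b := hQpos b ⟨by linarith, le_rfl⟩
  have hD : 0 < b * (∫ x in (-b)..b, Q x) - ∫ x in (-b)..b, x * Q x := by
    rw [← integral_sub_mul_eq hQc]
    exact integral_sub_mul_pos (by linarith) hQc.continuousOn
      fun x hx => hQpos x (Set.Ioo_subset_Icc_self hx)
  have hφ := hasDerivAt_momentumProfile (b := b) (σ := σ) hQc hR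
    (hQ.differentiable one_ne_zero b) hQb.ne' (by linarith)
  refine ⟨mul_pos hQb hD, hφ.differentiableAt, ?_⟩
  rw [integral_const_sub_mul_sub_mul hR hQc] at hσ
  rw [hφ.deriv, integral_const_sub_mul hR hQc]
  field_simp
  linear_combination (-∫ x in (-b)..b, Q x) * hσ
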